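/- arXiv:2308.13975 — 2 statements merged into one kernel-verified Lean document; each statement's English description precedes it below -/
import Mathlib

section
/- Let $n = 2k+1$ be odd, and let $E_i = E_{i,i+1} + E_{2k-i+1,2k-i+2}$ for $i < k$ and $E_k = \sqrt{2}(E_{k,k+1} + E_{k+1,k+2})$, with $F_i = E_i^t$. Then for all $i \in [1,k]$ and $t \in \mathbb{C}$, $\exp(tE_i)$ and $\exp(tF_i)$ belong to $G(\Omega_{2k+1}) = \{A : A\Omega_{2k+1}A^t = \Omega_{2k+1}\}$, the orthogonal group of the form $\Omega_{2k+1}$. -/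
open Matrix

/-- The anti-diagonal matrix `Ω_n = ∑ (-1)^(i+1) E_{i, n+1-i}`. -/
def Omega (n : ℕ) : Matrix (Fin n) (Fin n) ℂ :=
  Matrix.of fun i j => if (i : ℕ) + (j : ℕ) = n - 1 then (-1 : ℂ) ^ (i : ℕ) else 0

/-- The Chevalley generator `E_i` of `𝔰𝔬_{2k+1}` (1-indexed `i ∈ [1,k]`):
`E_i = E_{i,i+1} + E_{2k-i+1, 2k-i+2}` for `i < k` and
`E_k = √2 (E_{k,k+1} + E_{k+1,k+2})`. -/
noncomputable def EgenB (k : ℕ) (i : ℕ) (h1 : 1 ≤ i) (h2 : i ≤ k) :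
    Matrix (Fin (2 * k + 1)) (Fin (2 * k + 1)) ℂ :=
  if i < k then
    Matrix.single ⟨i - 1, by omega⟩ ⟨i, by omega⟩ 1 +
      Matrix.single ⟨2 * k - i, by omega⟩ ⟨2 * k - i + 1, by omega⟩ 1
  else
    (Real.sqrt 2 : ℂ) •
      (Matrix.single ⟨k - 1, by omega⟩ ⟨k, by omega⟩ 1 +
        Matrix.single ⟨k, by omega⟩ ⟨k + 1, by omega⟩ 1)

/-! The generator `E_i` is skew-adjoint for `Ω = Ω_{2k+1}`, i.e. `E_iᵀ Ω = -Ω E_i`: `Ω` reverses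
indices and its signs alternate, so it exchanges the two matrix units making up `E_i` up to a sign
`-1`. Because `Ω² = 1`, the transpose `F_i = E_iᵀ` is skew-adjoint as well. Finally, for a
skew-adjoint `A` conjugation by `Ω` turns `Aᵀ` into `-A`, whence
`exp(tA)ᵀ Ω exp(tA) = Ω exp(-tA) exp(tA) = Ω`. -/

namespace Matrix.IsSkewAdjoint

variable {m R : Type*} [Fintype m] [DecidableEq m]

theorem smul [CommRing R] {J A : Matrix m m R} (h : J.IsSkewAdjoint A) (c : R) :
    J.IsSkewAdjoint (c • A) := by
  simpa using (skewAdjointMatricesSubmodule J).smul_mem c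
    ((mem_skewAdjointMatricesSubmodule J A).2 h)

theorem of_transpose [CommRing R] {J A : Matrix m m R} (hJ : J * J = 1)
    (h : J.IsSkewAdjoint Aᵀ) : J.IsSkewAdjoint A := by
  have h' : A * J = -(J * Aᵀ) := by
    simpa [Matrix.IsSkewAdjoint, Matrix.IsAdjointPair] using h
  calc Aᵀ * J = J * (J * Aᵀ) * J := by rw [← Matrix.mul_assoc, hJ, Matrix.one_mul]
    _ = J * -(A * J) * J := by rw [h', neg_neg]
    _ = J * -A := by
      simp only [Matrix.mul_neg, Matrix.neg_mul, Matrix.mul_assoc, hJ, Matrix.mul_one]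

open NormedSpace in
theorem transpose_exp_mul_mul_exp [NormedCommRing R] [NormedAlgebra ℚ R] [CompleteSpace R]
    {J A : Matrix m m R} (hJ : IsUnit J) (h : J.IsSkewAdjoint A) :
    (exp A)ᵀ * J * exp A = J := by
  have hJdet : IsUnit J.det := (isUnit_iff_isUnit_det J).1 hJ
  have hconj : Aᵀ = J * -A * J⁻¹ := by
    rw [← (h : Aᵀ * J = J * -A), mul_nonsing_inv_cancel_right _ _ hJdet]
  rw [← exp_transpose, hconj, exp_conj _ _ hJ]
  calc J * exp (-A) * J⁻¹ * J * exp A = J * (exp (-A) * exp A) := by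
        rw [nonsing_inv_mul_cancel_right _ _ hJdet, Matrix.mul_assoc]
    _ = J := by
        rw [exp_neg, nonsing_inv_mul _ ((isUnit_iff_isUnit_det _).1 (isUnit_exp A)),
          Matrix.mul_one]

end Matrix.IsSkewAdjoint

section Omega

variable {n : ℕ}

theorem Omega_apply (i j : Fin n) :
    Omega n i j = if j = i.rev then (-1 : ℂ) ^ (i : ℕ) else 0 := by
  simp only [Omega, of_apply, Fin.ext_iff, Fin.val_rev]
  exact if_congr (by omega) rfl rfl

theorem Omega_mul_apply (M : Matrix (Fin n) (Fin n) ℂ) (i j : Fin n) :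
    (Omega n * M) i j = (-1) ^ (i : ℕ) * M i.rev j := by
  simp [mul_apply, Omega_apply]

theorem mul_Omega_apply (M : Matrix (Fin n) (Fin n) ℂ) (i j : Fin n) :
    (M * Omega n) i j = M i j.rev * (-1) ^ (j.rev : ℕ) := by
  have hrev (l : Fin n) : j = l.rev ↔ l = j.rev := by rw [eq_comm, Fin.rev_eq_iff]
  simp [mul_apply, Omega_apply, hrev]

theorem Omega_mul_Omega (hn : Odd n) : Omega n * Omega n = 1 := by
  ext i j
  rw [Omega_mul_apply, Omega_apply, one_apply, Fin.rev_rev]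
  by_cases hij : i = j
  · subst hij
    rw [if_pos rfl, if_pos rfl, ← pow_add, Fin.val_rev]
    exact Even.neg_one_pow ⟨(n - 1) / 2, by obtain ⟨r, rfl⟩ := hn; omega⟩
  · rw [if_neg (Ne.symm hij), if_neg hij, mul_zero]

theorem single_mul_Omega (a b : Fin n) (c : ℂ) :
    single a b c * Omega n = single a b.rev (c * (-1) ^ (b : ℕ)) := by
  ext i j
  rw [mul_Omega_apply, single_apply, single_apply]
  simp only [← Fin.rev_eq_iff (i := b)]
  split_ifs with h
  · obtain ⟨rfl, rfl⟩ := h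
    rw [Fin.rev_rev]
  · rw [zero_mul]

theorem Omega_mul_single (a b : Fin n) (c : ℂ) :
    Omega n * single a b c = single a.rev b ((-1) ^ (a.rev : ℕ) * c) := by
  ext i j
  rw [Omega_mul_apply, single_apply, single_apply]
  simp only [← Fin.rev_eq_iff (i := a)]
  split_ifs with h
  · obtain ⟨rfl, rfl⟩ := h
    rfl
  · rw [mul_zero]

theorem neg_one_pow_of_val_eq_succ {a b : Fin n} (hab : (b : ℕ) = a + 1) :
    (-1 : ℂ) ^ (b : ℕ) = -(-1) ^ (a : ℕ) := by
  rw [hab, pow_succ, mul_neg_one]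

theorem isSkewAdjoint_Omega_single_add_single_rev {a b : Fin n} (hab : (b : ℕ) = a + 1) :
    (Omega n).IsSkewAdjoint (single a b 1 + single b.rev a.rev 1) := by
  have hrev : (a.rev : ℕ) = b.rev + 1 := by simp only [Fin.val_rev]; omega
  simp only [Matrix.IsSkewAdjoint, Matrix.IsAdjointPair, transpose_add, transpose_single,
    Matrix.add_mul, Matrix.mul_neg, Matrix.mul_add, single_mul_Omega, Omega_mul_single,
    Fin.rev_rev, neg_one_pow_of_val_eq_succ hab, neg_one_pow_of_val_eq_succ hrev]
  simp [single_neg]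

end Omega

theorem isSkewAdjoint_Omega_EgenB (k i : ℕ) (h1 : 1 ≤ i) (h2 : i ≤ k) :
    (Omega (2 * k + 1)).IsSkewAdjoint (EgenB k i h1 h2) := by
  unfold EgenB
  split_ifs with hik
  · convert isSkewAdjoint_Omega_single_add_single_rev (n := 2 * k + 1)
      (a := ⟨i - 1, by omega⟩) (b := ⟨i, by omega⟩) (by simp only; omega) using 3 <;>
      (simp only [Fin.ext_iff, Fin.val_rev]; omega)
  · refine Matrix.IsSkewAdjoint.smul ?_ _
    convert isSkewAdjoint_Omega_single_add_single_rev (n := 2 * k + 1)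
      (a := ⟨k - 1, by omega⟩) (b := ⟨k, by omega⟩) (by simp only; omega) using 3 <;>
      (simp only [Fin.ext_iff, Fin.val_rev]; omega)

/-- For all `i ∈ [1,k]` and `t ∈ ℂ`, `exp(t E_i)` and `exp(t F_i)` (with `F_i = E_iᵀ`)
are orthogonal with respect to `Ω_{2k+1}`. -/
theorem stmt_13 (k : ℕ) (i : ℕ) (h1 : 1 ≤ i) (h2 : i ≤ k) (t : ℂ) :
    NormedSpace.exp (t • EgenB k i h1 h2) * Omega (2 * k + 1) *
        (NormedSpace.exp (t • EgenB k i h1 h2))ᵀ = Omega (2 * k + 1) ∧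
    NormedSpace.exp (t • (EgenB k i h1 h2)ᵀ) * Omega (2 * k + 1) *
        (NormedSpace.exp (t • (EgenB k i h1 h2)ᵀ))ᵀ = Omega (2 * k + 1) := by
  set Ω := Omega (2 * k + 1)
  have hΩΩ : Ω * Ω = 1 := Omega_mul_Omega (odd_two_mul_add_one k)
  have hexp (X : Matrix (Fin (2 * k + 1)) (Fin (2 * k + 1)) ℂ) (hX : Ω.IsSkewAdjoint Xᵀ) :
      NormedSpace.exp X * Ω * (NormedSpace.exp X)ᵀ = Ω := by
    simpa [Matrix.exp_transpose] using
      hX.transpose_exp_mul_mul_exp ⟨⟨Ω, Ω, hΩΩ, hΩΩ⟩, rfl⟩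
  have hE := isSkewAdjoint_Omega_EgenB k i h1 h2
  refine ⟨hexp _ ?_, hexp _ ?_⟩
  · rw [transpose_smul]
    exact (Matrix.IsSkewAdjoint.of_transpose hΩΩ (by rwa [transpose_transpose])).smul t
  · rw [transpose_smul, transpose_transpose]
    exact hE.smul t
end

section
/- The centralizer of the order-reversing permutation $w_0 \in S_n$ (sending $i \mapsto n+1-i$) is generated by the involutions $s_i = (i,i+1)(n-i,n-i+1)$ for $i \in [1,k-1]$ together with $s_k = (k,k+1)$ if $n = 2k$, or $s_k = (k,k+2)$ if $n = 2k+1$, where $k = \lfloor n/2 \rfloor$. -/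
/-- The type-B/C generator `s_i` of the centralizer of the order-reversing
permutation in `S_n` (1-indexed, `i ∈ [1, ⌊n/2⌋]`, 0-indexed positions):
`s_i = (i,i+1)(n-i,n-i+1)` for `i < k`, and `s_k = (k,k+1)` if `n = 2k`,
`s_k = (k,k+2)` if `n = 2k+1`, where `k = ⌊n/2⌋`. -/
def genBC (n : ℕ) (i : ℕ) : Equiv.Perm (Fin n) :=
  if h : 1 ≤ i ∧ i ≤ n / 2 then
    if hik : i < n / 2 then
      Equiv.swap ⟨i - 1, by omega⟩ ⟨i, by omega⟩ *
        Equiv.swap ⟨n - i - 1, by omega⟩ ⟨n - i, by omega⟩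
    else if hpar : n % 2 = 0 then
      Equiv.swap ⟨n / 2 - 1, by omega⟩ ⟨n / 2, by omega⟩
    else Equiv.swap ⟨n / 2 - 1, by omega⟩ ⟨n / 2 + 1, by omega⟩
  else 1

namespace Stmt14Aux

def genSet (n : ℕ) : Set (Equiv.Perm (Fin n)) :=
  {σ : Equiv.Perm (Fin n) | ∃ i : ℕ, 1 ≤ i ∧ i ≤ n / 2 ∧ σ = genBC n i}

lemma swap_apply_val {n : ℕ} (a b x : Fin n) :
    ((Equiv.swap a b) x : ℕ) =
      if (x : ℕ) = (a : ℕ) then (b : ℕ) else if (x : ℕ) = (b : ℕ) then (a : ℕ) else (x : ℕ) := by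
  rw [Equiv.swap_apply_def]
  split_ifs with h1 h2 h3 h4 h5 <;> simp_all [Fin.ext_iff]

lemma rev_val {n : ℕ} (x : Fin n) : ((Fin.revPerm x : Fin n) : ℕ) = n - 1 - (x : ℕ) := by
  have := x.isLt
  simp [Fin.val_rev]; omega

lemma genBC_apply_val {n i : ℕ} (h1 : 1 ≤ i) (h2 : i ≤ n / 2) (x : Fin n) :
    ((genBC n i x : Fin n) : ℕ) =
      if i < n / 2 then
        (if (x : ℕ) = i - 1 then i else if (x : ℕ) = i then i - 1 else
         if (x : ℕ) = n - i - 1 then n - i else if (x : ℕ) = n - i then n - i - 1 else (x : ℕ))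
      else if n % 2 = 0 then
        (if (x : ℕ) = n / 2 - 1 then n / 2 else if (x : ℕ) = n / 2 then n / 2 - 1 else (x : ℕ))
      else
        (if (x : ℕ) = n / 2 - 1 then n / 2 + 1 else
         if (x : ℕ) = n / 2 + 1 then n / 2 - 1 else (x : ℕ)) := by
  have hx := x.isLt
  unfold genBC
  rw [dif_pos ⟨h1, h2⟩]
  by_cases hik : i < n / 2
  · rw [dif_pos hik, if_pos hik, Equiv.Perm.mul_apply, swap_apply_val, swap_apply_val]
    try simp only [Fin.val_mk]
    split_ifs <;> omega
  · rw [dif_neg hik, if_neg hik]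
    by_cases hpar : n % 2 = 0
    · rw [dif_pos hpar, if_pos hpar, swap_apply_val]
    · rw [dif_neg hpar, if_neg hpar, swap_apply_val]

lemma genBC_fix {n i : ℕ} (h1 : 1 ≤ i) (h2 : i ≤ n / 2) (x : Fin n)
    (hx : (x : ℕ) + 1 < i ∨ ((x : ℕ) + 1 < n / 2 ∧ i = n / 2)) : genBC n i x = x := by
  apply Fin.ext
  rw [genBC_apply_val h1 h2]
  try simp only [Fin.val_mk]
  split_ifs <;> omega

lemma genBC_mem_cent (n i : ℕ) :
    genBC n i ∈ Subgroup.centralizer {(Fin.revPerm : Equiv.Perm (Fin n))} := by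
  by_cases h : 1 ≤ i ∧ i ≤ n / 2
  · rw [Subgroup.mem_centralizer_singleton_iff]
    apply Equiv.ext
    intro x
    apply Fin.ext
    have hx := x.isLt
    rw [Equiv.Perm.mul_apply, Equiv.Perm.mul_apply, rev_val,
      genBC_apply_val h.1 h.2, genBC_apply_val h.1 h.2, rev_val]
    try simp only [Fin.val_mk]
    have h2 := h.2
    have h1 := h.1
    split_ifs <;> omega
  · unfold genBC
    rw [dif_neg h]
    exact Subgroup.one_mem _

lemma mem_cent_iff {n : ℕ} (σ : Equiv.Perm (Fin n)) :
    σ ∈ Subgroup.centralizer {(Fin.revPerm : Equiv.Perm (Fin n))} ↔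
      ∀ x : Fin n, σ (Fin.revPerm x) = Fin.revPerm (σ x) := by
  rw [Subgroup.mem_centralizer_singleton_iff]
  constructor
  · intro h x
    rw [← Equiv.Perm.mul_apply, ← Equiv.Perm.mul_apply, h]
  · intro h
    apply Equiv.ext
    intro x
    rw [Equiv.Perm.mul_apply, Equiv.Perm.mul_apply]
    exact h x

lemma closure_le_cent (n : ℕ) :
    Subgroup.closure (genSet n) ≤
      Subgroup.centralizer {(Fin.revPerm : Equiv.Perm (Fin n))} := by
  rw [Subgroup.closure_le]
  rintro σ ⟨i, h1, h2, rfl⟩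
  exact genBC_mem_cent n i

lemma genBC_mem_closure {n i : ℕ} (h1 : 1 ≤ i) (h2 : i ≤ n / 2) :
    genBC n i ∈ Subgroup.closure (genSet n) :=
  Subgroup.subset_closure ⟨i, h1, h2, rfl⟩

lemma reach (n m : ℕ) : ∀ a (hm : m < n / 2) (hma : m ≤ a) (ha : a + m + 1 ≤ n)
    (hodd : n % 2 = 1 → a ≠ n / 2),
    ∃ g ∈ Subgroup.closure (genSet n), (∀ x : Fin n, (x : ℕ) < m → g x = x) ∧
      g ⟨a, by omega⟩ = (⟨m, by omega⟩ : Fin n) := by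
  intro a
  induction a using Nat.strong_induction_on with
  | _ a IH =>
  intro hm hma ha hodd
  rcases eq_or_lt_of_le hma with rfl | hlt
  · exact ⟨1, Subgroup.one_mem _, fun x _ => rfl, rfl⟩
  -- pick the generator index and target
  by_cases hcase : a < n / 2
  · -- left half: use generator i = a, move a ↦ a - 1
    have h1 : 1 ≤ a := by omega
    have h2 : a ≤ n / 2 := by omega
    have hstep : genBC n a ⟨a, by omega⟩ = (⟨a - 1, by omega⟩ : Fin n) := by
      apply Fin.ext
      rw [genBC_apply_val h1 h2]
      try simp only [Fin.val_mk]
      split_ifs <;> omega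
    obtain ⟨g', hg'G, hg'fix, hg'a⟩ := IH (a - 1) (by omega) hm (by omega) (by omega) (by omega)
    refine ⟨g' * genBC n a, Subgroup.mul_mem _ hg'G (genBC_mem_closure h1 h2), ?_, ?_⟩
    · intro x hx
      rw [Equiv.Perm.mul_apply, genBC_fix h1 h2 x (by omega), hg'fix x hx]
    · rw [Equiv.Perm.mul_apply, hstep, hg'a]
  by_cases hmid : a = n - n / 2
  · -- crossing the middle: use the middle generator, move a ↦ n/2 - 1
    have h1 : 1 ≤ n / 2 := by omega
    have h2 : n / 2 ≤ n / 2 := le_refl _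
    have hstep : genBC n (n / 2) ⟨a, by omega⟩ = (⟨n / 2 - 1, by omega⟩ : Fin n) := by
      apply Fin.ext
      rw [genBC_apply_val h1 h2]
      try simp only [Fin.val_mk]
      have := Nat.mod_two_eq_zero_or_one n
      rcases this with hp | hp
      · split_ifs <;> omega
      · have := hodd hp
        split_ifs <;> omega
    obtain ⟨g', hg'G, hg'fix, hg'a⟩ :=
      IH (n / 2 - 1) (by omega) hm (by omega) (by omega) (by omega)
    refine ⟨g' * genBC n (n / 2), Subgroup.mul_mem _ hg'G (genBC_mem_closure h1 h2), ?_, ?_⟩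
    · intro x hx
      rw [Equiv.Perm.mul_apply, genBC_fix h1 h2 x (by omega), hg'fix x hx]
    · rw [Equiv.Perm.mul_apply, hstep, hg'a]
  · -- right half: a > n - n/2, use generator i = n - a, move a ↦ a - 1
    have hgt : n - n / 2 < a := by
      have := Nat.mod_two_eq_zero_or_one n
      rcases this with hp | hp
      · omega
      · have := hodd hp; omega
    have h1 : 1 ≤ n - a := by omega
    have h2 : n - a ≤ n / 2 := by omega
    have hstep : genBC n (n - a) ⟨a, by omega⟩ = (⟨a - 1, by omega⟩ : Fin n) := by
      apply Fin.ext
      rw [genBC_apply_val h1 h2]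
      try simp only [Fin.val_mk]
      split_ifs <;> omega
    obtain ⟨g', hg'G, hg'fix, hg'a⟩ := IH (a - 1) (by omega) hm (by omega) (by omega) (by omega)
    refine ⟨g' * genBC n (n - a), Subgroup.mul_mem _ hg'G (genBC_mem_closure h1 h2), ?_, ?_⟩
    · intro x hx
      rw [Equiv.Perm.mul_apply, genBC_fix h1 h2 x (by omega), hg'fix x hx]
    · rw [Equiv.Perm.mul_apply, hstep, hg'a]

lemma step (n : ℕ) : ∀ j m, n / 2 ≤ m + j →
    ∀ σ ∈ Subgroup.centralizer {(Fin.revPerm : Equiv.Perm (Fin n))},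
    (∀ x : Fin n, (x : ℕ) < m → σ x = x) → σ ∈ Subgroup.closure (genSet n) := by
  intro j
  induction j with
  | zero =>
    intro m hm σ hσ hfix
    have hc := (mem_cent_iff σ).1 hσ
    have : σ = 1 := by
      apply Equiv.ext
      intro x
      rw [Equiv.Perm.one_apply]
      have hx := x.isLt
      by_cases h : (x : ℕ) < n / 2
      · exact hfix x (by omega)
      by_cases h' : n - 1 - (x : ℕ) < n / 2
      · have hrx : σ (Fin.revPerm x) = Fin.revPerm x := by
          apply hfix
          rw [rev_val]; omega
        have := hc x
        rw [hrx] at this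
        have h2 : Fin.revPerm (Fin.revPerm x) = x := by
          apply Fin.ext
          rw [rev_val, rev_val]; omega
        calc σ x = σ (Fin.revPerm (Fin.revPerm x)) := by rw [h2]
          _ = Fin.revPerm (σ (Fin.revPerm x)) := hc _
          _ = Fin.revPerm (Fin.revPerm x) := by rw [hrx]
          _ = x := h2
      · -- middle point of odd n
        have hxm : (x : ℕ) = n / 2 ∧ n % 2 = 1 := by omega
        have hrev : Fin.revPerm x = x := by
          apply Fin.ext
          simp only [Fin.revPerm_apply, Fin.val_rev]; omega
        have := hc x
        rw [hrev] at this
        have hval := congrArg Fin.val this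
        simp only [Fin.revPerm_apply, Fin.val_rev] at hval
        have hsx := (σ x).isLt
        apply Fin.ext
        omega
    rw [this]
    exact Subgroup.one_mem _
  | succ j IH =>
    intro m hm σ hσ hfix
    by_cases hj : n / 2 ≤ m + j
    · exact IH m hj σ hσ hfix
    have hmk : m < n / 2 := by omega
    have hn2 : 2 ≤ n := by omega
    have hc := (mem_cent_iff σ).1 hσ
    have hfixtop : ∀ x : Fin n, n ≤ (x : ℕ) + m → σ x = x := by
      intro x hx
      have hx' := x.isLt
      have h2 : Fin.revPerm (Fin.revPerm x) = x := by
        simp [Fin.rev_rev]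
      have hrx : σ (Fin.revPerm x) = Fin.revPerm x := by
        apply hfix
        simp only [Fin.revPerm_apply, Fin.val_rev]; omega
      calc σ x = σ (Fin.revPerm (Fin.revPerm x)) := by rw [h2]
        _ = Fin.revPerm (σ (Fin.revPerm x)) := hc _
        _ = Fin.revPerm (Fin.revPerm x) := by rw [hrx]
        _ = x := h2
    obtain ⟨A, hA⟩ : ∃ A : Fin n, σ ⟨m, by omega⟩ = A := ⟨_, rfl⟩
    have hAlt := A.isLt
    have ham : m ≤ (A : ℕ) := by
      by_contra hcon
      have hfa : σ A = A := hfix A (by omega)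
      have := σ.injective (hA.trans hfa.symm)
      have := congrArg Fin.val this
      simp at this; omega
    have hab : (A : ℕ) + m + 1 ≤ n := by
      by_contra hcon
      have hfa : σ A = A := hfixtop A (by omega)
      have := σ.injective (hA.trans hfa.symm)
      have := congrArg Fin.val this
      simp at this; omega
    have hodd : n % 2 = 1 → (A : ℕ) ≠ n / 2 := by
      intro hp hcon
      have hmidlt : n / 2 < n := by omega
      have hrev : Fin.revPerm (⟨n / 2, hmidlt⟩ : Fin n) = ⟨n / 2, hmidlt⟩ := by
        apply Fin.ext
        simp only [Fin.revPerm_apply, Fin.val_rev]; omega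
      have hmid := hc ⟨n / 2, hmidlt⟩
      rw [hrev] at hmid
      have hval := congrArg Fin.val hmid
      simp only [Fin.revPerm_apply, Fin.val_rev] at hval
      have hsx := (σ ⟨n / 2, hmidlt⟩).isLt
      have hfixmid : σ ⟨n / 2, hmidlt⟩ = ⟨n / 2, hmidlt⟩ := by
        apply Fin.ext; simp only [Fin.val_mk]; omega
      have hAeq : A = (⟨n / 2, hmidlt⟩ : Fin n) := Fin.ext hcon
      have := σ.injective (hA.trans (hAeq.trans hfixmid.symm))
      have := congrArg Fin.val this
      simp at this; omega
    obtain ⟨g, hgG, hgfix, hga⟩ := reach n m (A : ℕ) hmk ham hab hodd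
    have hgA : g A = (⟨m, by omega⟩ : Fin n) := hga
    have hσ' : (g * σ) ∈ Subgroup.centralizer {(Fin.revPerm : Equiv.Perm (Fin n))} :=
      Subgroup.mul_mem _ (closure_le_cent n hgG) hσ
    have hfix' : ∀ x : Fin n, (x : ℕ) < m + 1 → (g * σ) x = x := by
      intro x hx
      rcases Nat.lt_or_ge (x : ℕ) m with h | h
      · rw [Equiv.Perm.mul_apply, hfix x h, hgfix x h]
      · have hxm : x = (⟨m, by omega⟩ : Fin n) := Fin.ext (by simp only [Fin.val_mk]; omega)
        rw [hxm, Equiv.Perm.mul_apply, hA, hgA]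
    have hG' : (g * σ) ∈ Subgroup.closure (genSet n) :=
      IH (m + 1) (by omega) (g * σ) hσ' hfix'
    have hre : σ = g⁻¹ * (g * σ) := by rw [← mul_assoc, inv_mul_cancel, one_mul]
    rw [hre]
    exact Subgroup.mul_mem _ (Subgroup.inv_mem _ hgG) hG'

end Stmt14Aux

/-- The centralizer of the order-reversing permutation in `S_n` is generated by
the involutions `s_i`, `i ∈ [1, ⌊n/2⌋]`. -/
theorem stmt_14 (n : ℕ) :
    Subgroup.centralizer {(Fin.revPerm : Equiv.Perm (Fin n))} =
      Subgroup.closure {σ : Equiv.Perm (Fin n) | ∃ i : ℕ, 1 ≤ i ∧ i ≤ n / 2 ∧ σ = genBC n i} := by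
  apply le_antisymm
  · intro σ hσ
    exact Stmt14Aux.step n (n / 2) 0 (by omega) σ hσ (fun x hx => absurd hx (by omega))
  · exact Stmt14Aux.closure_le_cent n
end
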